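/- For any binary vector t ∈ F_2^n and any binary x ∈ {0,1}^n with Σ_{i∈Supp(t)} x_i even, the map f ↦ |f − x| (componentwise) maps the single parity polytope U(t) bijectively onto itself. -/

import Mathlib

open Finset

/-- Support of a binary vector. -/
def SuppZ {n : ℕ} (t : Fin n → ZMod 2) : Finset (Fin n) :=
  Finset.univ.filter (fun i => t i ≠ 0)

open Classical in
/-- Support of a real vector. -/
noncomputable def SuppR {n : ℕ} (p : Fin n → ℝ) : Finset (Fin n) :=
  Finset.univ.filter (fun i => p i ≠ 0)

/-- Single parity polytope U(t). -/
def parityPolytope {n : ℕ} (t : Fin n → ZMod 2) : Set (Fin n → ℝ) :=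
  {f | (∀ i, f i ∈ Set.Icc (0:ℝ) 1) ∧
    ∀ S ⊆ SuppZ t, Odd S.card →
      ∑ j ∈ S, f j + ∑ j ∈ SuppZ t \ S, (1 - f j) ≤ ((SuppZ t).card : ℝ) - 1}

/-- Fundamental polytope P(H). -/
def fundamentalPolytope {m n : ℕ} (H : Fin m → Fin n → ZMod 2) : Set (Fin n → ℝ) :=
  ⋂ i, parityPolytope (H i)

/-- The binary linear code C(H). -/
def code {m n : ℕ} (H : Fin m → Fin n → ZMod 2) : Set (Fin n → ZMod 2) :=
  {x | ∀ i, ∑ j, x j * H i j = 0}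

/-- Embedding of a binary vector into ℝ^n as a 0-1 vector. -/
def embed {n : ℕ} (x : Fin n → ZMod 2) : Fin n → ℝ := fun i => ((x i).val : ℝ)

/-- A vertex of a set: a point of the set not expressible as a proper convex
combination of two distinct points of the set. -/
def IsVertex {n : ℕ} (X : Set (Fin n → ℝ)) (f : Fin n → ℝ) : Prop :=
  f ∈ X ∧ ∀ g h : Fin n → ℝ, g ∈ X → h ∈ X → ∀ t : ℝ, 0 < t → t < 1 →
    (f = fun i => t * g i + (1 - t) * h i) → g = h

/-!
On the unit cube, `f ↦ |f - x|` flips the coordinates `f i ↦ 1 - f i` with `x i = 1` and fixes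
the others. Flipping the coordinates in a set `A` turns the inequality of `U(t)` indexed by `S`
into the one indexed by `S ∆ (Supp t ∩ A)`, which is again odd when `|Supp t ∩ A|` is even, and
the hypothesis on `x` says exactly that. A flip is an involution, hence a bijection of `U(t)`.
-/

open scoped symmDiff

section Flip

variable {ι : Type*} [DecidableEq ι]

def flipOn (A : Finset ι) (f : ι → ℝ) : ι → ℝ := fun j => if j ∈ A then 1 - f j else f j

theorem flipOn_involutive (A : Finset ι) : Function.Involutive (flipOn A) := by
  intro f; funext j; unfold flipOn; split_ifs <;> ring

theorem flipOn_mem_Icc {A : Finset ι} {f : ι → ℝ} {j : ι} (hf : f j ∈ Set.Icc (0 : ℝ) 1) :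
    flipOn A f j ∈ Set.Icc (0 : ℝ) 1 := by
  obtain ⟨h0, h1⟩ := hf
  unfold flipOn; split_ifs <;> constructor <;> linarith

theorem sum_add_sum_sdiff_one_sub {S T : Finset ι} (hS : S ⊆ T) (f : ι → ℝ) :
    ∑ j ∈ S, f j + ∑ j ∈ T \ S, (1 - f j) = ∑ j ∈ T, if j ∈ S then f j else 1 - f j := by
  rw [sum_ite, filter_mem_eq_inter, inter_eq_right.mpr hS, filter_notMem_eq_sdiff]

theorem sum_flipOn_add_sum_sdiff {S T : Finset ι} (hS : S ⊆ T) (A : Finset ι) (f : ι → ℝ) :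
    ∑ j ∈ S, flipOn A f j + ∑ j ∈ T \ S, (1 - flipOn A f j) =
      ∑ j ∈ S ∆ (T ∩ A), f j + ∑ j ∈ T \ (S ∆ (T ∩ A)), (1 - f j) := by
  have hST : S ∆ (T ∩ A) ⊆ T := symmDiff_subset_union.trans (union_subset hS inter_subset_left)
  rw [sum_add_sum_sdiff_one_sub hS, sum_add_sum_sdiff_one_sub hST]
  refine sum_congr rfl fun j hj => ?_
  by_cases hjS : j ∈ S <;> by_cases hjA : j ∈ A <;> simp [flipOn, mem_symmDiff, hj, hjS, hjA]

theorem Odd.card_symmDiff {S B : Finset ι} (hS : Odd #S) (hB : Even #B) : Odd #(S ∆ B) := by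
  have hunion : #(S ∆ B) = #(S \ B) + #(B \ S) :=
    card_union_of_disjoint disjoint_sdiff_sdiff
  have hS' := card_sdiff_add_card_inter S B
  have hB' := card_sdiff_add_card_inter B S
  rw [inter_comm] at hB'
  rw [Nat.odd_iff] at hS ⊢
  rw [Nat.even_iff] at hB
  omega

end Flip

theorem flipOn_mapsTo_parityPolytope {n : ℕ} {t : Fin n → ZMod 2} {A : Finset (Fin n)}
    (hA : Even #(SuppZ t ∩ A)) :
    Set.MapsTo (flipOn A) (parityPolytope t) (parityPolytope t) := by
  rintro f ⟨hbox, hineq⟩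
  refine ⟨fun i => flipOn_mem_Icc (hbox i), fun S hS hSodd => ?_⟩
  rw [sum_flipOn_add_sum_sdiff hS]
  exact hineq _ (symmDiff_subset_union.trans (union_subset hS inter_subset_left))
    (hSodd.card_symmDiff hA)

theorem flipOn_bijOn_parityPolytope {n : ℕ} {t : Fin n → ZMod 2} {A : Finset (Fin n)}
    (hA : Even #(SuppZ t ∩ A)) :
    Set.BijOn (flipOn A) (parityPolytope t) (parityPolytope t) :=
  have h := flipOn_mapsTo_parityPolytope hA
  Set.InvOn.bijOn ⟨fun f _ => flipOn_involutive A f, fun f _ => flipOn_involutive A f⟩ h h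

theorem ZMod.two_eq_zero_or_one (a : ZMod 2) : a = 0 ∨ a = 1 := by
  revert a; decide

theorem sum_zmod_two_eq_card_filter {ι : Type*} (s : Finset ι) (x : ι → ZMod 2) :
    ∑ i ∈ s, x i = #{i ∈ s | x i = 1} := by
  rw [← sum_boole]
  refine sum_congr rfl fun i _ => ?_
  rcases ZMod.two_eq_zero_or_one (x i) with h | h <;> simp [h]

theorem embed_apply_eq_ite {n : ℕ} (x : Fin n → ZMod 2) (i : Fin n) :
    embed x i = if x i = 1 then 1 else 0 := by
  rcases ZMod.two_eq_zero_or_one (x i) with h | h <;> simp [embed, h, ZMod.val_one]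

theorem abs_sub_embed_eqOn_flipOn {n : ℕ} (x : Fin n → ZMod 2) :
    Set.EqOn (fun f i => |f i - embed x i|) (flipOn {i | x i = 1})
      (Set.univ.pi fun _ => Set.Icc 0 1) := by
  intro f hbox
  funext i
  obtain ⟨h0, h1⟩ := hbox i (Set.mem_univ i)
  simp only [flipOn, embed_apply_eq_ite, mem_filter, mem_univ, true_and]
  split_ifs
  · rw [abs_sub_comm, abs_of_nonneg (by linarith)]
  · rw [sub_zero, abs_of_nonneg h0]

theorem stmt18 {n : ℕ} (t x : Fin n → ZMod 2)
    (hx : ∑ i ∈ SuppZ t, x i = 0) :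
    Set.BijOn (fun f i => |f i - embed x i|) (parityPolytope t) (parityPolytope t) := by
  have hA : Even #(SuppZ t ∩ ({i | x i = 1} : Finset (Fin n))) := by
    rw [← filter_mem_eq_inter]
    simpa [sum_zmod_two_eq_card_filter, ZMod.natCast_eq_zero_iff_even] using hx
  exact (flipOn_bijOn_parityPolytope hA).congr
    ((abs_sub_embed_eqOn_flipOn x).mono fun f hf => Set.mem_univ_pi.mpr hf.1).symm
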